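/- (Hausdorff paradox) There is a countable subset D of the unit sphere S² in ℝ³ such that S² \ D is SO(3)-paradoxical. -/

import Mathlib

open scoped Pointwise

/-- `A` and `B` are `G`-equidecomposable: there are finite partitions
`A = A₁ ∪ … ∪ Aₙ` and `B = B₁ ∪ … ∪ Bₙ` into pairwise disjoint pieces and
`g₁, …, gₙ ∈ G` with `Bᵢ = gᵢ • Aᵢ`. -/
def Equidecomposable (G : Type*) {X : Type*} [Group G] [MulAction G X] (A B : Set X) : Prop :=
  ∃ (n : ℕ) (P : Fin n → Set X) (g : Fin n → G),
    Pairwise (Function.onFun Disjoint P) ∧ (⋃ i, P i) = A ∧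
    Pairwise (Function.onFun Disjoint fun i => g i • P i) ∧ (⋃ i, g i • P i) = B

/-- `E` is `G`-paradoxical: `E` is nonempty and splits into two disjoint pieces,
each `G`-equidecomposable with `E`. -/
def Paradoxical (G : Type*) {X : Type*} [Group G] [MulAction G X] (E : Set X) : Prop :=
  E.Nonempty ∧ ∃ A B : Set X, A ∪ B = E ∧ Disjoint A B ∧
    Equidecomposable G A E ∧ Equidecomposable G B E

abbrev E3 : Type := EuclideanSpace ℝ (Fin 3)
abbrev SO3 : Type := Matrix.specialOrthogonalGroup (Fin 3) ℝ

noncomputable instance : Group SO3 :=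
  { (inferInstance : Monoid SO3) with
    inv := fun A => ⟨star A.1, by
      refine ⟨Unitary.star_mem A.2.1, ?_⟩
      show (star A.1).det = 1
      have h : A.1.det = 1 := A.2.2
      rw [Matrix.star_eq_conjTranspose, Matrix.det_conjTranspose, h]
      simp⟩
    inv_mul_cancel := fun A => Subtype.ext (Matrix.mem_unitaryGroup_iff'.mp A.2.1) }

noncomputable instance : SMul SO3 E3 := ⟨fun g x => WithLp.toLp 2 (g.1.mulVec (WithLp.ofLp x))⟩

/-- `SO3` acts on `ℝ³` by rotation (matrix-vector multiplication). -/
noncomputable instance : MulAction SO3 E3 where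
  one_smul x := congrArg (WithLp.toLp 2) (Matrix.one_mulVec (WithLp.ofLp x))
  mul_smul g h x := congrArg (WithLp.toLp 2) (Matrix.mulVec_mulVec (WithLp.ofLp x) g.1 h.1).symm

lemma SO3.smul_add (g : SO3) (x y : E3) : g • (x + y) = g • x + g • y :=
  congrArg (WithLp.toLp 2) (Matrix.mulVec_add g.1 (WithLp.ofLp x) (WithLp.ofLp y))

lemma SO3.smul_neg (g : SO3) (x : E3) : g • (-x) = -(g • x) :=
  congrArg (WithLp.toLp 2) (Matrix.mulVec_neg (WithLp.ofLp x) g.1)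

/-!
The rotations `a` and `b` by `arccos (1 / 3)` about the `z`- and `x`-axes generate a free group:
in the coordinates `(x, y √2, z) / 3ⁿ` a reduced word acts on `(1, 0, 1)` by integer recurrences
whose middle numerator is never divisible by `3`, so it does not fix that point.
The free group is paradoxical under left multiplication (decompose by the first letter of the
reduced word, moving the ray `{a⁻ⁿ}` from the `a⁻¹`-piece to the `a`-piece to absorb `1`).
A nontrivial rotation fixes only two points of `S²`, so removing the countable set `D` of points
fixed by some nontrivial word leaves a set on which the free group acts freely; choosing a point in
each orbit transfers the paradoxical decomposition of the group to `S² \ D`.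
-/

open Set

section Equidecomposition

variable {G X : Type*} [Group G] [MulAction G X]

theorem equidecomposable_union_smul_union {P Q : Set X} {g h : G} (hPQ : Disjoint P Q)
    (hgh : Disjoint (g • P) (h • Q)) : Equidecomposable G (P ∪ Q) (g • P ∪ h • Q) := by
  refine ⟨2, ![P, Q], ![g, h], ?_, ?_, ?_, ?_⟩
  · intro i j hij
    fin_cases i <;> fin_cases j <;> simp_all [Function.onFun, hPQ.symm]
  · ext; simp [Fin.exists_fin_two]
  · intro i j hij
    fin_cases i <;> fin_cases j <;> simp_all [Function.onFun, hgh.symm]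
  · ext; simp [Fin.exists_fin_two]

theorem equidecomposable_union_univ {P Q : Set X} {g : G} (hPQ : Disjoint P Q)
    (hQ : g • Q = Pᶜ) : Equidecomposable G (P ∪ Q) univ := by
  have h := equidecomposable_union_smul_union (g := 1) (h := g) hPQ
    (by rw [one_smul, hQ]; exact disjoint_compl_right)
  rwa [one_smul, hQ, union_compl_self] at h

end Equidecomposition

section Transfer

variable {G H X : Type*} [Group G] [Group H] [MulAction G X] (φ : H →* G)

def homSMul (p : H × X) : X := φ p.1 • p.2

theorem smul_image_homSMul (g : H) (T : Set H) (M : Set X) :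
    φ g • homSMul φ '' (T ×ˢ M) = homSMul φ '' ((g • T) ×ˢ M) := by
  ext x
  simp only [mem_smul_set, mem_image, mem_prod, Prod.exists, homSMul, smul_eq_mul]
  constructor
  · rintro ⟨_, ⟨h, m, ⟨hh, hm⟩, rfl⟩, rfl⟩
    exact ⟨g * h, m, ⟨⟨h, hh, rfl⟩, hm⟩, by rw [map_mul, mul_smul]⟩
  · rintro ⟨_, m, ⟨⟨h, hh, rfl⟩, hm⟩, rfl⟩
    exact ⟨φ h • m, ⟨h, m, ⟨hh, hm⟩, rfl⟩, by rw [map_mul, mul_smul]⟩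

variable {φ}

theorem Equidecomposable.image_homSMul {M : Set X} (hM : InjOn (homSMul φ) (univ ×ˢ M))
    {A B : Set H} (hAB : Equidecomposable H A B) :
    Equidecomposable G (homSMul φ '' (A ×ˢ M)) (homSMul φ '' (B ×ˢ M)) := by
  obtain ⟨n, P, g, hP, rfl, hgP, rfl⟩ := hAB
  have hdisj {S T : Set H} (hST : Disjoint S T) :
      Disjoint (homSMul φ '' (S ×ˢ M)) (homSMul φ '' (T ×ˢ M)) :=
    (disjoint_prod.2 (Or.inl hST)).image hM (prod_mono (subset_univ _) le_rfl)
      (prod_mono (subset_univ _) le_rfl)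
  refine ⟨n, fun i => homSMul φ '' (P i ×ˢ M), fun i => φ (g i), fun i j hij => hdisj (hP hij),
    by rw [iUnion_prod_const, image_iUnion], fun i j hij => ?_, ?_⟩
  · simp only [Function.onFun, smul_image_homSMul]
    exact hdisj (hgP hij)
  · simp only [smul_image_homSMul, iUnion_prod_const, image_iUnion]

theorem exists_bijOn_homSMul {E : Set X} (hinv : ∀ h, ∀ x ∈ E, φ h • x ∈ E)
    (hfree : ∀ h, ∀ x ∈ E, φ h • x = x → h = 1) :
    ∃ M : Set X, BijOn (homSMul φ) (univ ×ˢ M) E := by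
  let _ : MulAction H X := MulAction.compHom X φ
  let rep (x : X) : X := (Quotient.mk (MulAction.orbitRel H X) x).out
  have rep_mem (x : X) : ∃ h : H, φ h • x = rep x :=
    MulAction.orbitRel_apply.1 (Quotient.mk_out x)
  have rep_eq {x y : X} (hxy : ∃ h : H, φ h • y = x) : rep x = rep y :=
    congrArg Quotient.out (Quotient.sound (MulAction.orbitRel_apply.2 hxy))
  have rep_rep (x : X) : rep (rep x) = rep x := rep_eq (rep_mem x)
  refine ⟨rep '' E, ?_, ?_, ?_⟩
  · rintro ⟨h, _⟩ ⟨-, x, hx, rfl⟩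
    obtain ⟨k, hk⟩ := rep_mem x
    rw [homSMul, ← hk, ← mul_smul, ← map_mul]
    exact hinv _ x hx
  · rintro ⟨h, _⟩ ⟨-, x, hx, rfl⟩ ⟨h', _⟩ ⟨-, x', hx', rfl⟩ (hxx' : φ h • rep x = φ h' • rep x')
    have hrep : rep x = rep x' := by
      rw [← rep_rep x, ← rep_rep x']
      exact rep_eq ⟨h⁻¹ * h', by rw [map_mul, mul_smul, ← hxx', map_inv, inv_smul_smul]⟩
    obtain ⟨k, hk⟩ := rep_mem x
    have hfix : φ (h'⁻¹ * h) • rep x = rep x := by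
      rw [map_mul, mul_smul, hxx', map_inv, inv_smul_smul, hrep]
    have hmem : rep x ∈ E := hk ▸ hinv k x hx
    rw [hrep, inv_mul_eq_one.1 (hfree _ _ hmem hfix)]
  · intro x hx
    obtain ⟨k, hk⟩ := rep_mem x
    exact ⟨(k⁻¹, rep x), ⟨mem_univ _, x, hx, rfl⟩, by
      rw [homSMul, ← hk, map_inv, inv_smul_smul]⟩

theorem Paradoxical.of_free {E : Set X} (hH : Paradoxical H (univ : Set H)) (hE : E.Nonempty)
    (hinv : ∀ h, ∀ x ∈ E, φ h • x ∈ E) (hfree : ∀ h, ∀ x ∈ E, φ h • x = x → h = 1) :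
    Paradoxical G E := by
  obtain ⟨M, hM⟩ := exists_bijOn_homSMul hinv hfree
  obtain ⟨-, A, B, hAB, hdisj, hA, hB⟩ := hH
  have himage : homSMul φ '' (univ ×ˢ M) = E := hM.image_eq
  refine ⟨hE, homSMul φ '' (A ×ˢ M), homSMul φ '' (B ×ˢ M), ?_, ?_, ?_, ?_⟩
  · rw [← image_union, ← union_prod, hAB, himage]
  · exact (disjoint_prod.2 (Or.inl hdisj)).image hM.injOn (prod_mono (subset_univ _) le_rfl)
      (prod_mono (subset_univ _) le_rfl)
  · rw [← himage]; exact hA.image_homSMul hM.injOn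
  · rw [← himage]; exact hB.image_homSMul hM.injOn

theorem Paradoxical.sdiff_setOf_fixed (hH : Paradoxical H (univ : Set H)) {S : Set X}
    (hS : ∀ h, ∀ x ∈ S, φ h • x ∈ S)
    (hne : (S \ {x | ∃ h : H, h ≠ 1 ∧ φ h • x = x}).Nonempty) :
    Paradoxical G (S \ {x | ∃ h : H, h ≠ 1 ∧ φ h • x = x}) := by
  refine hH.of_free hne (fun h x ⟨hxS, hx⟩ => ⟨hS h x hxS, ?_⟩) fun h x hx hfix => ?_
  · rintro ⟨k, hk, hkx⟩
    refine hx ⟨h⁻¹ * k * h, fun h1 => hk ?_, ?_⟩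
    · rwa [mul_assoc, inv_mul_eq_one, eq_comm, mul_eq_right] at h1
    · rw [map_mul, map_mul, mul_smul, mul_smul, hkx, map_inv, inv_smul_smul]
  · by_contra hh
    exact hx.2 ⟨h, hh, hfix⟩

end Transfer

theorem smul_range_inv_pow {G : Type*} [Group G] (g : G) :
    g • range (fun n : ℕ => g⁻¹ ^ n) = insert g (range fun n : ℕ => g⁻¹ ^ n) := by
  ext x
  simp only [mem_smul_set, mem_range, mem_insert_iff, smul_eq_mul]
  constructor
  · rintro ⟨_, ⟨_ | n, rfl⟩, rfl⟩
    · exact Or.inl (by rw [pow_zero, mul_one])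
    · exact Or.inr ⟨n, by rw [pow_succ', mul_inv_cancel_left]⟩
  · rintro (rfl | ⟨n, rfl⟩)
    · exact ⟨1, ⟨0, pow_zero _⟩, mul_one x⟩
    · exact ⟨g⁻¹ ^ (n + 1), ⟨n + 1, rfl⟩, by rw [pow_succ', mul_inv_cancel_left]⟩

namespace FreeGroup

variable {α : Type*}

theorem inv_mk_singleton (w : α × Bool) : (mk [w])⁻¹ = mk [(w.1, !w.2)] := by
  simp [inv_mk, invRev]

variable [DecidableEq α]

theorem mk_mul_notMem_startsWith {w : α × Bool} {g : FreeGroup α}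
    (hg : g ∈ startsWith (w.1, !w.2)) : mk [w] * g ∉ startsWith w := by
  obtain ⟨L, hL⟩ : ∃ L, g.toWord = (w.1, !w.2) :: L := by
    simp only [startsWith, mem_ofPred_eq] at hg
    cases h : g.toWord with
    | nil => simp [h] at hg
    | cons τ L => simp_all
  have hred : IsReduced ((w.1, !w.2) :: L) := hL ▸ isReduced_toWord
  have hmul : mk [w] * g = mk L := by
    rw [← mk_toWord (x := g), hL, ← List.singleton_append (l := L), ← mul_mk, ← inv_mk_singleton,
      mul_inv_cancel_left]
  intro hw
  simp only [startsWith, mem_ofPred_eq, hmul, toWord_mk, hred.infix (List.suffix_cons _ _).isInfix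
    |>.reduce_eq] at hw
  cases L with
  | nil => simp at hw
  | cons τ K =>
    obtain rfl : τ = w := by simpa using hw
    simpa using (isReduced_cons_cons.1 hred).1 rfl

theorem of_smul_startsWith (a : α) : of a • startsWith (a, false) = (startsWith (a, true))ᶜ := by
  ext u
  simp only [mem_smul_set, smul_eq_mul, mem_compl_iff]
  constructor
  · rintro ⟨v, hv, rfl⟩
    exact mk_mul_notMem_startsWith (w := (a, true)) hv
  · intro hu
    exact ⟨mk [(a, false)] * u, startsWith_mk_mul u hu, by
      show mk [(a, true)] * (mk [((a, true).1, !(a, true).2)] * u) = u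
      rw [← inv_mk_singleton, mul_inv_cancel_left]⟩

theorem toWord_of_inv_pow (a : α) (n : ℕ) :
    ((of a)⁻¹ ^ n).toWord = List.replicate n (a, false) := by
  simp [inv_pow, toWord_inv, toWord_of_pow, invRev]

theorem range_of_inv_pow_subset (a : α) :
    range (fun n : ℕ => (of a)⁻¹ ^ n) ⊆ insert 1 (startsWith (a, false)) := by
  rintro _ ⟨_ | n, rfl⟩
  · exact mem_insert _ _
  · refine mem_insert_of_mem _ ?_
    simp only [startsWith, mem_ofPred_eq, toWord_of_inv_pow, List.replicate_succ]
    rfl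

theorem eq_one_or_mem_startsWith (w : FreeGroup α) : w = 1 ∨ ∃ σ, w ∈ startsWith σ := by
  cases h : w.toWord with
  | nil => exact Or.inl (toWord_eq_nil_iff.1 h)
  | cons σ L => exact Or.inr ⟨σ, by simp [startsWith, h]⟩

theorem paradoxical_univ : Paradoxical (FreeGroup Bool) (univ : Set (FreeGroup Bool)) := by
  set C : Set (FreeGroup Bool) := range fun n : ℕ => (of true)⁻¹ ^ n
  have hC := range_of_inv_pow_subset true
  have h1C : (1 : FreeGroup Bool) ∈ C := ⟨0, pow_zero _⟩
  have hstarts {σ τ : Bool × Bool} {w : FreeGroup Bool} (hσ : w ∈ startsWith σ)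
      (hτ : w ∈ startsWith τ) : σ = τ := by
    by_contra h; exact (startsWith.disjoint_iff_ne.2 h).notMem_of_mem_left hσ hτ
  refine ⟨univ_nonempty, (startsWith (true, true) ∪ C) ∪ (startsWith (true, false) \ C),
    startsWith (false, true) ∪ startsWith (false, false), ?_, ?_,
    equidecomposable_union_univ ?_ (g := of true) ?_,
    equidecomposable_union_univ (startsWith.disjoint_iff_ne.2 (by decide))
      (of_smul_startsWith false)⟩
  · refine eq_univ_of_forall fun w => ?_
    by_cases hwC : w ∈ C
    · simp [hwC]
    obtain rfl | ⟨⟨_ | _, _ | _⟩, hw⟩ := eq_one_or_mem_startsWith w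
    · exact absurd h1C hwC
    all_goals simp [hw, hwC]
  · refine disjoint_left.2 fun w hA hB => ?_
    obtain ⟨b, hb⟩ : ∃ b, w ∈ startsWith (false, b) := hB.elim (⟨_, ·⟩) (⟨_, ·⟩)
    rcases hA with (hA | hA) | ⟨hA, -⟩
    · cases hstarts hA hb
    · rcases hC hA with rfl | hA
      · exact startsWith.ne_one _ hb rfl
      · cases hstarts hA hb
    · cases hstarts hA hb
  · exact disjoint_union_left.2 ⟨(startsWith.disjoint_iff_ne.2 (by decide)).mono_right
      sdiff_subset, disjoint_sdiff_right⟩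
  · have ha : of true ∈ startsWith (true, true) := by simp [startsWith]
    rw [smul_set_sdiff, of_smul_startsWith, smul_range_inv_pow, compl_union, ← sdiff_eq,
      sdiff_insert_of_notMem (notMem_compl_iff.2 ha)]

end FreeGroup

section Rotations

variable {R : Type*} [CommRing R]

def rotZ (c s : R) : Matrix (Fin 3) (Fin 3) R := !![c, -s, 0; s, c, 0; 0, 0, 1]

def rotX (c s : R) : Matrix (Fin 3) (Fin 3) R := !![1, 0, 0; 0, c, -s; 0, s, c]

theorem rotZ_mem_specialOrthogonalGroup {c s : R} (h : c ^ 2 + s ^ 2 = 1) :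
    rotZ c s ∈ Matrix.specialOrthogonalGroup (Fin 3) R := by
  refine ⟨(Matrix.mem_orthogonalGroup_iff' (Fin 3) R).2 ?_, ?_⟩
  · ext i j
    fin_cases i <;> fin_cases j <;>
      simp [rotZ, Matrix.mul_apply, Fin.sum_univ_three] <;> grind
  · simp [rotZ, Matrix.det_fin_three]
    linear_combination h

theorem rotX_mem_specialOrthogonalGroup {c s : R} (h : c ^ 2 + s ^ 2 = 1) :
    rotX c s ∈ Matrix.specialOrthogonalGroup (Fin 3) R := by
  refine ⟨(Matrix.mem_orthogonalGroup_iff' (Fin 3) R).2 ?_, ?_⟩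
  · ext i j
    fin_cases i <;> fin_cases j <;>
      simp [rotX, Matrix.mul_apply, Fin.sum_univ_three] <;> grind
  · simp [rotX, Matrix.det_fin_three]
    linear_combination h

end Rotations

section Sphere

open Metric

theorem linearIndependent_pair_of_mem_sphere {E : Type*} [NormedAddCommGroup E] [NormedSpace ℝ E]
    {p q : E} (hp : p ∈ sphere (0 : E) 1) (hq : q ∈ sphere (0 : E) 1) (hqp : q ≠ p)
    (hqp' : q ≠ -p) : LinearIndependent ℝ ![p, q] := by
  rw [mem_sphere_zero_iff_norm] at hp hq
  refine linearIndependent_fin2.2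
    ⟨norm_ne_zero_iff.1 (by simp [hq]), fun a (ha : a • q = p) => ?_⟩
  have ha1 : |a| = 1 := by simpa [norm_smul, hp, hq] using congrArg norm ha
  rcases abs_eq zero_le_one |>.1 ha1 with rfl | rfl
  · exact hqp (by rwa [one_smul] at ha)
  · exact hqp' (by rw [← ha, neg_one_smul, neg_neg])

theorem not_countable_sphere {E : Type*} [NormedAddCommGroup E] [NormedSpace ℝ E]
    (h : 1 < Module.rank ℝ E) {r : ℝ} (hr : 0 < r) : ¬ (sphere (0 : E) r).Countable := by
  have : Nontrivial E := rank_pos_iff_nontrivial.1 (zero_lt_one.trans h)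
  obtain ⟨x, hx⟩ := exists_norm_eq E hr.le
  intro hc
  have hxx := hc.isTotallyDisconnected _ subset_rfl (isPreconnected_sphere h 0 r)
    (mem_sphere_zero_iff_norm.2 hx) (mem_sphere_zero_iff_norm.2 (by rwa [norm_neg]))
  have : x = 0 := by simpa [eq_neg_iff_add_eq_zero, ← two_smul ℝ x] using hxx
  simp [this, hr.ne] at hx

end Sphere

section CrossProduct

open Matrix

variable {R : Type*} [CommRing R]

theorem Matrix.transpose_mulVec_cross_mulVec (A : Matrix (Fin 3) (Fin 3) R) (u v : Fin 3 → R) :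
    Aᵀ *ᵥ ((A *ᵥ u) ⨯₃ (A *ᵥ v)) = A.det • (u ⨯₃ v) := by
  ext i
  fin_cases i <;>
    simp [cross_apply, mulVec, dotProduct, Fin.sum_univ_three, det_fin_three] <;> ring

theorem Matrix.mulVec_cross_of_mem_specialOrthogonalGroup {A : Matrix (Fin 3) (Fin 3) R}
    (hA : A ∈ specialOrthogonalGroup (Fin 3) R) (u v : Fin 3 → R) :
    A *ᵥ (u ⨯₃ v) = (A *ᵥ u) ⨯₃ (A *ᵥ v) := by
  rw [← one_smul R (u ⨯₃ v), ← show A.det = 1 from hA.2, ← transpose_mulVec_cross_mulVec,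
    mulVec_mulVec, (mem_orthogonalGroup_iff (Fin 3) R).1 hA.1, one_mulVec]

theorem Matrix.eq_one_of_mulVec_eq_self {A : Matrix (Fin 3) (Fin 3) ℝ}
    (hA : A ∈ specialOrthogonalGroup (Fin 3) ℝ) {p q : Fin 3 → ℝ}
    (hpq : LinearIndependent ℝ ![p, q]) (hp : A *ᵥ p = p) (hq : A *ᵥ q = q) : A = 1 := by
  set w := p ⨯₃ q
  have hw : A *ᵥ w = w := by rw [mulVec_cross_of_mem_specialOrthogonalGroup hA, hp, hq]
  set N : Matrix (Fin 3) (Fin 3) ℝ := Matrix.of ![p, q, w]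
  have hdet : IsUnit N.det := by
    rw [show N.det = p ⬝ᵥ q ⨯₃ w from (triple_product_eq_det p q w).symm,
      triple_product_permutation, triple_product_permutation]
    exact Ne.isUnit <|
      dotProduct_self_eq_zero.not.2 (crossProduct_ne_zero_iff_linearIndependent.2 hpq)
  have hfix : N * Aᵀ = N := by
    have hrow (i : Fin 3) : A *ᵥ N i = N i := by fin_cases i <;> assumption
    ext i j
    simp [← congrFun (hrow i) j, mul_apply, mulVec, dotProduct, mul_comm]
  rw [← transpose_eq_one]
  exact ((isUnit_iff_isUnit_det _).2 hdet).mul_left_cancel (hfix.trans (mul_one _).symm)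

end CrossProduct

theorem SO3.smul_real_smul (g : SO3) (c : ℝ) (x : E3) : g • (c • x) = c • (g • x) :=
  congrArg (WithLp.toLp 2) (Matrix.mulVec_smul g.1 c (WithLp.ofLp x))

theorem SO3.coe_inv (g : SO3) : (g⁻¹ : SO3).1 = Matrix.transpose g.1 := rfl

theorem SO3.smul_apply (g : SO3) (x : E3) (i : Fin 3) :
    (g • x) i = g.1.mulVec (WithLp.ofLp x) i := rfl

noncomputable section FreeSubgroup

open Real FreeGroup

theorem third_sq_add_sq : (1 / 3 : ℝ) ^ 2 + (2 * √2 / 3) ^ 2 = 1 := by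
  norm_num [div_pow, mul_pow]

def rotA : SO3 := ⟨rotZ (1 / 3) (2 * √2 / 3), rotZ_mem_specialOrthogonalGroup third_sq_add_sq⟩

def rotB : SO3 := ⟨rotX (1 / 3) (2 * √2 / 3), rotX_mem_specialOrthogonalGroup third_sq_add_sq⟩

def rotAB : FreeGroup Bool →* SO3 := FreeGroup.lift fun i => cond i rotA rotB

def ofTriple (v : ℤ × ℤ × ℤ) : E3 := WithLp.toLp 2 ![v.1, v.2.1 * √2, v.2.2]

def tripleStep : Bool × Bool → ℤ × ℤ × ℤ → ℤ × ℤ × ℤ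
  | (true, true), (x, y, z) => (x - 4 * y, 2 * x + y, 3 * z)
  | (true, false), (x, y, z) => (x + 4 * y, y - 2 * x, 3 * z)
  | (false, true), (x, y, z) => (3 * x, y - 2 * z, 4 * y + z)
  | (false, false), (x, y, z) => (3 * x, y + 2 * z, z - 4 * y)

theorem three_smul_rotAB_mk_singleton (σ : Bool × Bool) (v : ℤ × ℤ × ℤ) :
    (3 : ℝ) • (rotAB (mk [σ]) • ofTriple v) = ofTriple (tripleStep σ v) := by
  obtain ⟨x, y, z⟩ := v
  obtain ⟨_ | _, _ | _⟩ := σ <;> ext j <;> fin_cases j <;>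
    simp [rotAB, lift_mk, rotA, rotB, rotZ, rotX, SO3.coe_inv, SO3.smul_apply, ofTriple,
      tripleStep, Matrix.mulVec, dotProduct, Fin.sum_univ_three] <;>
    ring_nf <;> norm_num <;> ring

theorem three_pow_smul_rotAB_mk (L : List (Bool × Bool)) (v : ℤ × ℤ × ℤ) :
    (3 : ℝ) ^ L.length • (rotAB (mk L) • ofTriple v) = ofTriple (L.foldr tripleStep v) := by
  induction L with
  | nil => simp [← one_eq_mk]
  | cons σ L ih =>
    rw [← List.singleton_append, ← mul_mk, _root_.map_mul, mul_smul, List.length_append,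
      List.length_singleton, add_comm, pow_succ', mul_smul, ← SO3.smul_real_smul, ih,
      three_smul_rotAB_mk_singleton, List.foldr_append]
    rfl

/-- The numerators are congruent mod 3 to a unit multiple of `(1, -1, 0)`, `(1, 1, 0)`,
`(0, 1, 1)`, `(0, 1, -1)` for the letters `a`, `a⁻¹`, `b`, `b⁻¹` respectively. -/
def Mod3Pattern : Bool × Bool → ℤ × ℤ × ℤ → Prop
  | (true, b), (x, y, z) => ¬ 3 ∣ y ∧ 3 ∣ z ∧ 3 ∣ (if b then x else -x) + y
  | (false, b), (x, y, z) => ¬ 3 ∣ y ∧ 3 ∣ x ∧ 3 ∣ (if b then z else -z) - y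

theorem Mod3Pattern.not_three_dvd {σ : Bool × Bool} {v : ℤ × ℤ × ℤ} (h : Mod3Pattern σ v) :
    ¬ 3 ∣ v.2.1 := by
  obtain ⟨_ | _, _⟩ := σ <;> exact h.1

theorem mod3Pattern_tripleStep_start (σ : Bool × Bool) :
    Mod3Pattern σ (tripleStep σ (1, 0, 1)) := by
  obtain ⟨_ | _, _ | _⟩ := σ <;> norm_num [Mod3Pattern, tripleStep]

theorem Mod3Pattern.step {σ τ : Bool × Bool} {v : ℤ × ℤ × ℤ} (hv : Mod3Pattern σ v)
    (hτσ : τ.1 = σ.1 → τ.2 = σ.2) : Mod3Pattern τ (tripleStep τ v) := by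
  obtain ⟨x, y, z⟩ := v
  obtain ⟨_ | _, _ | _⟩ := σ <;> obtain ⟨_ | _, _ | _⟩ := τ <;>
    simp_all [Mod3Pattern, tripleStep] <;> omega

theorem mod3Pattern_foldr (L : List (Bool × Bool)) (σ : Bool × Bool) (hL : IsReduced (σ :: L)) :
    Mod3Pattern σ ((σ :: L).foldr tripleStep (1, 0, 1)) := by
  induction L generalizing σ with
  | nil => exact mod3Pattern_tripleStep_start σ
  | cons τ L ih =>
    obtain ⟨hστ, hL⟩ := isReduced_cons_cons.1 hL
    exact (ih τ hL).step hστ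

theorem injective_rotAB : Function.Injective rotAB := by
  refine (injective_iff_map_eq_one _).2 fun w hw => ?_
  cases hL : w.toWord with
  | nil => exact toWord_eq_nil_iff.1 hL
  | cons σ L =>
    have hpat := mod3Pattern_foldr L σ (hL ▸ isReduced_toWord)
    have hw' : rotAB (mk (σ :: L)) = 1 := by rw [← hL, mk_toWord, hw]
    have key := congrArg (· 1) (three_pow_smul_rotAB_mk (σ :: L) (1, 0, 1))
    rw [hw', one_smul] at key
    have hy : ((σ :: L).foldr tripleStep (1, 0, 1)).2.1 = 0 := by
      simpa [ofTriple] using key.symm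
    exact (hpat.not_three_dvd (by rw [hy]; exact dvd_zero 3)).elim

end FreeSubgroup

section SpecialOrthogonalSphere

open Metric

theorem SO3.norm_smul (g : SO3) (x : E3) : ‖g • x‖ = ‖x‖ :=
  ContinuousLinearMap.norm_map_of_mem_unitary
    (Unitary.map_mem (Matrix.toEuclideanCLM (n := Fin 3) (𝕜 := ℝ)) g.2.1) x

theorem SO3.smul_mem_sphere (g : SO3) {x : E3} {r : ℝ} (hx : x ∈ sphere (0 : E3) r) :
    g • x ∈ sphere (0 : E3) r := by
  rwa [mem_sphere_zero_iff_norm, SO3.norm_smul, ← mem_sphere_zero_iff_norm]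

theorem SO3.eq_or_eq_neg_of_smul_eq_self {g : SO3} (hg : g ≠ 1) {p q : E3}
    (hp : p ∈ sphere (0 : E3) 1) (hq : q ∈ sphere (0 : E3) 1) (hgp : g • p = p)
    (hgq : g • q = q) : q = p ∨ q = -p := by
  by_contra! h
  have hli : LinearIndependent ℝ ![WithLp.ofLp p, WithLp.ofLp q] := by
    have hpq := (linearIndependent_pair_of_mem_sphere hp hq h.1 h.2).map' _
      (LinearEquiv.ker (WithLp.linearEquiv 2 ℝ (Fin 3 → ℝ)))
    rwa [show _ ∘ ![p, q] = ![WithLp.ofLp p, WithLp.ofLp q] by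
      ext i : 1; fin_cases i <;> rfl] at hpq
  exact hg (Subtype.ext (Matrix.eq_one_of_mulVec_eq_self g.2 hli (congrArg WithLp.ofLp hgp)
    (congrArg WithLp.ofLp hgq)))

theorem SO3.countable_sphere_fixed {g : SO3} (hg : g ≠ 1) :
    {x ∈ sphere (0 : E3) 1 | g • x = x}.Countable := by
  rcases eq_empty_or_nonempty {x ∈ sphere (0 : E3) 1 | g • x = x} with h | ⟨p, hp, hgp⟩
  · rw [h]
    exact countable_empty
  · refine ({p, -p} : Set E3).toFinite.countable.mono fun q ⟨hq, hgq⟩ => ?_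
    exact SO3.eq_or_eq_neg_of_smul_eq_self hg hp hq hgp hgq

end SpecialOrthogonalSphere

/-- The Hausdorff paradox: there is a countable subset `D` of the unit sphere `S²` such
that `S² \ D` is `SO(3)`-paradoxical. -/
theorem hausdorff_paradox :
    ∃ D : Set E3, D.Countable ∧ D ⊆ Metric.sphere (0 : E3) 1 ∧
      Paradoxical SO3 (Metric.sphere (0 : E3) 1 \ D) := by
  set S := Metric.sphere (0 : E3) 1
  set N := {x : E3 | ∃ h : FreeGroup Bool, h ≠ 1 ∧ rotAB h • x = x}
  have hSN : (S ∩ N).Countable := by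
    have : S ∩ N = ⋃ h : {h : FreeGroup Bool // h ≠ 1}, {x ∈ S | rotAB h • x = x} := by
      ext x
      simp [N, S]
    rw [this]
    exact countable_iUnion fun h => SO3.countable_sphere_fixed
      ((map_ne_one_iff _ injective_rotAB).2 h.2)
  have hrank : 1 < Module.rank ℝ E3 := by
    rw [← Module.finrank_eq_rank, finrank_euclideanSpace]
    norm_num
  refine ⟨S ∩ N, hSN, inter_subset_left, ?_⟩
  rw [sdiff_self_inter]
  refine FreeGroup.paradoxical_univ.sdiff_setOf_fixed (fun h x hx => SO3.smul_mem_sphere _ hx) ?_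
  exact sdiff_nonempty.2 fun hSN' =>
    not_countable_sphere hrank one_pos (hSN.mono (subset_inter subset_rfl hSN'))
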